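/- Let P be a concurrent program and 𝒫 a set of preemption points. P has a sequentially consistent interleaving whose set of preemption positions corresponds exactly to 𝒫 if and only if the block-program P^𝒫 has a sequentially consistent interleaving of its blocks in which no two consecutive blocks come from the same thread. -/

import Mathlib

/-- Memory events: reads and writes of natural-number values to variables of type `V`. -/
inductive Event (V : Type) where
  | read  (x : V) (d : ℕ)
  | write (x : V) (d : ℕ)
deriving DecidableEq

variable {V ι : Type}

/-- A sequence of events is sequentially consistent (SC): every read `r(x,d)` has a
preceding write `w(x,d)` with no write of a different value to `x` in between. -/
def SC (σ : List (Event V)) : Prop :=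
  ∀ p x d, σ[(p : ℕ)]? = some (Event.read x d) →
    ∃ q, q < p ∧ σ[q]? = some (Event.write x d) ∧
      ∀ r, q < r → r < p → ∀ d', d' ≠ d → σ[r]? ≠ some (Event.write x d')

/-- `σ` is an interleaving of the given threads: its restriction to each
thread identifier equals that thread's event sequence. -/
def IsInterleaving [DecidableEq ι] (threads : ι → List (Event V)) (σ : List (ι × Event V)) : Prop :=
  ∀ i, σ.filterMap (fun a => if a.1 = i then some a.2 else none) = threads i

/-- A preemption occurs at position `j`: the events at `j` and `j+1` are from
different threads and the event at `j` is not the last event of its thread. -/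
def PreemptionAt (σ : List (ι × Event V)) (j : ℕ) : Prop :=
  ∃ a b, σ[j]? = some a ∧ σ[j + 1]? = some b ∧ a.1 ≠ b.1 ∧
    ∃ r c, j < r ∧ σ[r]? = some c ∧ c.1 = a.1

open Classical in
/-- The number of preemption positions of `σ`. -/
noncomputable def numPreemptions (σ : List (ι × Event V)) : ℕ :=
  ((Finset.range σ.length).filter fun j => PreemptionAt σ j).card

open Classical in
/-- The number of context switches of `σ` (adjacent events of different threads). -/
noncomputable def numSwitches (σ : List (ι × Event V)) : ℕ :=
  ((Finset.range σ.length).filter fun j =>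
    ∃ a b, σ[j]? = some a ∧ σ[j + 1]? = some b ∧ a.1 ≠ b.1).card

/-- The (increasing) list of positions of `σ` carrying events of thread `i`. -/
def threadPositions [DecidableEq ι] (σ : List (ι × Event V)) (i : ι) : List ℕ :=
  (List.range σ.length).filter fun p => decide ((σ[p]?).map Prod.fst = some i)

/-- The position in `σ` of the `j`-th event of thread `i`. -/
def posOf [DecidableEq ι] (σ : List (ι × Event V)) (i : ι) (j : ℕ) : ℕ :=
  (threadPositions σ i).getD j 0

/-- All events of thread `t` occur before all events of thread `t'` in `σ`. -/
def ThreadBefore [DecidableEq ι] (σ : List (ι × Event V)) (t t' : ι) : Prop :=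
  ∀ p ∈ threadPositions σ t, ∀ q ∈ threadPositions σ t', p < q

/-- The event is a write to variable `x`. -/
def writesTo (x : V) : Event V → Prop
  | Event.write y _ => y = x
  | _ => False

/-- A 1-writer program: for each variable, a single thread performs all writes to it. -/
def OneWriter (threads : ι → List (Event V)) : Prop :=
  ∀ x i i', (∃ e ∈ threads i, writesTo x e) → (∃ e ∈ threads i', writesTo x e) → i = i'

/-- The events of thread `i` from its index `s` onwards appear contiguously in `σ`. -/
def ContiguousFrom [DecidableEq ι] (σ : List (ι × Event V)) (i : ι) (s : ℕ) : Prop :=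
  ∀ j, s ≤ j → j + 1 < (threadPositions σ i).length → posOf σ i (j + 1) = posOf σ i j + 1

/-- Conflict-graph edge `tr → tw` between outer blocks (suffixes of the threads
starting at indices `s tr`, `s tw`): the last write to some variable `x` in the
outer block of `tw` conflicts with a read of `x` in the outer block of `tr`. -/
def ConflictEdge [DecidableEq ι] (threads : ι → List (Event V)) (s : ι → ℕ) (tr tw : ι) : Prop :=
  tr ≠ tw ∧ ∃ x d d' jr jw, d ≠ d' ∧
    s tr ≤ jr ∧ (threads tr)[jr]? = some (Event.read x d) ∧
    s tw ≤ jw ∧ (threads tw)[jw]? = some (Event.write x d') ∧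
    ∀ j d'', jw < j → (threads tw)[j]? ≠ some (Event.write x d'')

/-- Splitting a list into contiguous blocks immediately after each position in `cut`. -/
def splitAtCuts {α : Type} (l : List α) (cut : Finset ℕ) : List (List α) :=
  let cs := cut.sort (· ≤ ·)
  ((0 :: cs.map (· + 1)).zip (cs.map (· + 1) ++ [l.length])).map fun p => (l.take p.2).drop p.1

/-! A preemption is the position of a non-final event of some thread that is immediately
followed by an event of another thread, and distinct events of the interleaving sit at distinct
positions. Hence the preemptions are exactly the positions of the cut events iff every thread is
switched out after exactly its cut events; off the cuts this says that consecutive events of a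
thread are adjacent (the blocks are contiguous), at the cuts that the next block belongs to
another thread. Sequential consistency is untouched, as the same interleaving serves both sides. -/

section ThreadPositions

variable [DecidableEq ι] {σ : List (ι × Event V)} {i i' : ι} {m m' p : ℕ}

lemma mem_threadPositions :
    p ∈ threadPositions σ i ↔ p < σ.length ∧ (σ[p]?).map Prod.fst = some i := by
  simp [threadPositions]

lemma sortedLT_threadPositions (σ : List (ι × Event V)) (i : ι) :
    (threadPositions σ i).SortedLT :=
  (List.pairwise_lt_range.filter _).sortedLT

lemma threadPositions_cons (a : ι × Event V) (σ : List (ι × Event V)) (i : ι) :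
    threadPositions (a :: σ) i =
      (if a.1 = i then [0] else []) ++ (threadPositions σ i).map (· + 1) := by
  unfold threadPositions
  rw [List.length_cons, List.range_succ_eq_map, List.filter_cons, List.filter_map]
  by_cases h : a.1 = i <;> simp [h, Function.comp_def]

lemma length_threadPositions (σ : List (ι × Event V)) (i : ι) :
    (threadPositions σ i).length =
      (σ.filterMap fun a => if a.1 = i then some a.2 else none).length := by
  induction σ with
  | nil => simp [threadPositions]
  | cons a σ ih =>
    rw [threadPositions_cons, List.filterMap_cons]
    by_cases h : a.1 = i <;> simp [h, ih]

lemma IsInterleaving.length_threadPositions {threads : ι → List (Event V)}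
    (hσ : IsInterleaving threads σ) (i : ι) :
    (threadPositions σ i).length = (threads i).length := by
  rw [_root_.length_threadPositions, hσ i]

lemma posOf_eq_getElem (hm : m < (threadPositions σ i).length) :
    posOf σ i m = (threadPositions σ i)[m] := by
  simp [posOf, List.getD_eq_getElem?_getD, hm]

lemma posOf_mem (hm : m < (threadPositions σ i).length) : posOf σ i m ∈ threadPositions σ i := by
  rw [posOf_eq_getElem hm]
  exact List.getElem_mem hm

lemma posOf_lt_posOf_iff (hm : m < (threadPositions σ i).length)
    (hm' : m' < (threadPositions σ i).length) : posOf σ i m < posOf σ i m' ↔ m < m' := by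
  rw [posOf_eq_getElem hm, posOf_eq_getElem hm']
  exact (sortedLT_threadPositions σ i).getElem_lt_getElem_iff

lemma exists_posOf_eq_of_mem (hp : p ∈ threadPositions σ i) :
    ∃ m, m < (threadPositions σ i).length ∧ posOf σ i m = p := by
  obtain ⟨m, hm, rfl⟩ := List.getElem_of_mem hp
  exact ⟨m, hm, posOf_eq_getElem hm⟩

lemma eq_and_eq_of_posOf_eq (hm : m < (threadPositions σ i).length)
    (hm' : m' < (threadPositions σ i').length) (h : posOf σ i m = posOf σ i' m') :
    i = i' ∧ m = m' := by
  have hi : i = i' := by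
    have h₁ := (mem_threadPositions.1 (posOf_mem hm)).2
    rw [h, (mem_threadPositions.1 (posOf_mem hm')).2] at h₁
    exact (Option.some.inj h₁).symm
  subst hi
  rw [posOf_eq_getElem hm, posOf_eq_getElem hm'] at h
  exact ⟨rfl, (sortedLT_threadPositions σ i).nodup.getElem_inj_iff.1 h⟩

end ThreadPositions

section Switches

variable [DecidableEq ι] {σ : List (ι × Event V)} {i : ι} {m j : ℕ}

/-- Another thread (or nothing) follows the `m`-th event of thread `i`. -/
def SwitchesAfter (σ : List (ι × Event V)) (i : ι) (m : ℕ) : Prop :=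
  (σ[posOf σ i m + 1]?).map Prod.fst ≠ some i

lemma posOf_succ_eq_succ_iff (hm : m + 1 < (threadPositions σ i).length) :
    posOf σ i (m + 1) = posOf σ i m + 1 ↔ ¬ SwitchesAfter σ i m := by
  rw [SwitchesAfter, not_not]
  constructor
  · intro h
    rw [← h]
    exact (mem_threadPositions.1 (posOf_mem hm)).2
  · intro h
    have hlt := (posOf_lt_posOf_iff (m.lt_succ_self.trans hm) hm).2 m.lt_succ_self
    have hmem : posOf σ i m + 1 ∈ threadPositions σ i :=
      mem_threadPositions.2 ⟨by have := (mem_threadPositions.1 (posOf_mem hm)).1; omega, h⟩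
    obtain ⟨m', hm', hpos⟩ := exists_posOf_eq_of_mem hmem
    have hmm' := (posOf_lt_posOf_iff (m.lt_succ_self.trans hm) hm').1 (by omega)
    rcases (Nat.succ_le_of_lt hmm').eq_or_lt with rfl | hlt'
    · exact hpos
    · have := (posOf_lt_posOf_iff hm hm').2 hlt'
      omega

lemma preemptionAt_iff : PreemptionAt σ j ↔
    ∃ i m, m + 1 < (threadPositions σ i).length ∧ posOf σ i m = j ∧ SwitchesAfter σ i m := by
  constructor
  · rintro ⟨a, b, ha, hb, hab, r, c, hjr, hr, hrc⟩
    have hj : j ∈ threadPositions σ a.1 :=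
      mem_threadPositions.2 ⟨(List.getElem?_eq_some_iff.1 ha).1, by simp [ha]⟩
    have hr : r ∈ threadPositions σ a.1 :=
      mem_threadPositions.2 ⟨(List.getElem?_eq_some_iff.1 hr).1, by simp [hr, hrc]⟩
    obtain ⟨m, hm, rfl⟩ := exists_posOf_eq_of_mem hj
    obtain ⟨m', hm', rfl⟩ := exists_posOf_eq_of_mem hr
    have hmm' := (posOf_lt_posOf_iff hm hm').1 hjr
    refine ⟨a.1, m, by omega, rfl, ?_⟩
    simpa [SwitchesAfter, hb] using fun h => hab h.symm
  · rintro ⟨i, m, hm, rfl, hswitch⟩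
    have hm₀ : m < (threadPositions σ i).length := m.lt_succ_self.trans hm
    have hlt := (posOf_lt_posOf_iff hm₀ hm).2 m.lt_succ_self
    obtain ⟨-, hfst⟩ := mem_threadPositions.1 (posOf_mem hm₀)
    obtain ⟨hlen', hfst'⟩ := mem_threadPositions.1 (posOf_mem hm)
    obtain ⟨a, ha, rfl⟩ := Option.map_eq_some_iff.1 hfst
    obtain ⟨c, hc, hci⟩ := Option.map_eq_some_iff.1 hfst'
    obtain ⟨b, hb⟩ : ∃ b, σ[posOf σ a.1 m + 1]? = some b :=
      ⟨_, List.getElem?_eq_getElem (by omega)⟩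
    refine ⟨a, b, ha, hb, ?_, _, c, hlt, hc, hci⟩
    simpa [SwitchesAfter, hb, eq_comm] using hswitch

lemma preemptionAt_iff_exists_cut_iff {cuts : ι → Finset ℕ}
    (hcuts : ∀ i, ∀ c ∈ cuts i, c + 1 < (threadPositions σ i).length) :
    (∀ j, PreemptionAt σ j ↔ ∃ i, ∃ c ∈ cuts i, posOf σ i c = j) ↔
      ∀ i m, m + 1 < (threadPositions σ i).length → (SwitchesAfter σ i m ↔ m ∈ cuts i) := by
  simp only [preemptionAt_iff]
  constructor
  · intro h i m hm
    constructor
    · intro hswitch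
      obtain ⟨i', c, hc, hpos⟩ := (h _).1 ⟨i, m, hm, rfl, hswitch⟩
      obtain ⟨rfl, rfl⟩ := eq_and_eq_of_posOf_eq (by have := hcuts i' c hc; omega) (by omega) hpos
      exact hc
    · intro hc
      obtain ⟨i', m', hm', hpos, hswitch⟩ := (h _).2 ⟨i, m, hc, rfl⟩
      obtain ⟨rfl, rfl⟩ := eq_and_eq_of_posOf_eq (by omega) (by omega) hpos
      exact hswitch
  · intro h j
    constructor
    · rintro ⟨i, m, hm, rfl, hswitch⟩
      exact ⟨i, m, (h i m hm).1 hswitch, rfl⟩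
    · rintro ⟨i, c, hc, rfl⟩
      exact ⟨i, c, hcuts i c hc, rfl, (h i c (hcuts i c hc)).2 hc⟩

lemma forall_switchesAfter_iff_mem_iff {cuts : ι → Finset ℕ}
    (hcuts : ∀ i, ∀ c ∈ cuts i, c + 1 < (threadPositions σ i).length) :
    (∀ i m, m + 1 < (threadPositions σ i).length → (SwitchesAfter σ i m ↔ m ∈ cuts i)) ↔
      (∀ i m, m + 1 < (threadPositions σ i).length → m ∉ cuts i →
          posOf σ i (m + 1) = posOf σ i m + 1) ∧
        ∀ i, ∀ c ∈ cuts i, SwitchesAfter σ i c := by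
  constructor
  · intro h
    refine ⟨fun i m hm hc => ?_, fun i c hc => (h i c (hcuts i c hc)).2 hc⟩
    exact (posOf_succ_eq_succ_iff hm).2 (mt (h i m hm).1 hc)
  · rintro ⟨hcontig, hswitch⟩ i m hm
    refine ⟨fun hs => ?_, hswitch i m⟩
    by_contra hc
    exact (posOf_succ_eq_succ_iff hm).1 (hcontig i m hm hc) hs

end Switches

/-- `P` has an SC interleaving whose preemption positions correspond
exactly to the chosen preemption points `cuts` iff the corresponding block-program has
an SC interleaving in which the blocks appear contiguously and no two consecutive
blocks come from the same thread. -/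
theorem stmt6 {V : Type} (k : ℕ) (threads : Fin k → List (Event V))
    (cuts : Fin k → Finset ℕ)
    (hvalid : ∀ i, ∀ c ∈ cuts i, c + 1 < (threads i).length) :
    (∃ σ : List (Fin k × Event V),
        IsInterleaving threads σ ∧ SC (σ.map Prod.snd) ∧
        ∀ j, PreemptionAt σ j ↔ ∃ i, ∃ c ∈ cuts i, posOf σ i c = j) ↔
    (∃ σ : List (Fin k × Event V),
        IsInterleaving threads σ ∧ SC (σ.map Prod.snd) ∧
        (∀ i j, j + 1 < (threads i).length → j ∉ cuts i →
            posOf σ i (j + 1) = posOf σ i j + 1) ∧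
        (∀ i, ∀ c ∈ cuts i, (σ[posOf σ i c + 1]?).map Prod.fst ≠ some i)) := by
  refine exists_congr fun σ => and_congr_right fun hσ => and_congr_right fun _ => ?_
  simp only [← hσ.length_threadPositions] at hvalid ⊢
  rw [preemptionAt_iff_exists_cut_iff hvalid, forall_switchesAfter_iff_mem_iff hvalid]
  rfl
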